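/- Let f : I ⊆ (0,∞) → (0,∞) be differentiable on I°, let a, b ∈ I° with a < b, f' integrable on [a,b], and suppose |f'|^q is s-geometrically convex on [a,b] for some q ≥ 1 and s ∈ (0,1]. If |f'(a)| ≥ 1 and |f'(b)| ≥ 1, then |f(√(ab)) − (1/(ln b − ln a)) ∫_a^b f(x)/x dx| ≤ ln(b/a) · (1/2)^{3−1/q} · [ a|f'(a)||f'(b)|^{1−s} g₁(θ₃)^{1/q} + b|f'(b)||f'(a)|^{1−s} g₁(θ₄)^{1/q} ]. -/

import Mathlib

/-!
Along the geometric path `t ↦ a ^ (1 - t) * b ^ t` the logarithmic mean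
`(log b - log a)⁻¹ ∫ f(x)/x dx` becomes the plain mean of `h = f ∘ path` over `[0, 1]`,
and `√(ab)` is the image of `t = 1/2`. Integrating by parts against the midpoint kernel bounds
the left-hand side by `∫₀^{1/2} t (|h'(t)| + |h'(1 - t)|) dt`, and `|h'(1 - t)|` is `|h'(t)|`
for the reversed path. On each half, Hölder's inequality with weight `t` reduces the estimate
to `∫₀^{1/2} t (x |f'(x)|)^q dt`; s-geometric convexity together with `t ^ s ≤ s t + 1 - s`
(usable since `|f'| ≥ 1` at the endpoints) bounds the integrand by an exponential in `t`, and
`∫₀^{1/2} t u^{2t} dt = g₁(u) / 4`.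
-/

open Real MeasureTheory Set

/-- `g` is `s`-geometrically convex on `J`. -/
def SGeometricallyConvexOn (s : ℝ) (J : Set ℝ) (g : ℝ → ℝ) : Prop :=
  ∀ x ∈ J, ∀ y ∈ J, ∀ t ∈ Set.Icc (0:ℝ) 1,
    g (x ^ t * y ^ (1 - t)) ≤ g x ^ t ^ s * g y ^ (1 - t) ^ s

noncomputable def g₁ (u : ℝ) : ℝ :=
  if u = 1 then 1/2 else (u * Real.log u - u + 1) / (Real.log u) ^ 2

noncomputable def g₂ (u : ℝ) : ℝ :=
  if u = 1 then 1 else (u - 1) / Real.log u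

noncomputable def geomPath (u v t : ℝ) : ℝ := u ^ (1 - t) * v ^ t

section geomPath

variable {u v : ℝ}

lemma geomPath_eq_exp (hu : 0 < u) (hv : 0 < v) (t : ℝ) :
    geomPath u v t = exp (log u + t * (log v - log u)) := by
  rw [geomPath, rpow_def_of_pos hu, rpow_def_of_pos hv, ← exp_add]
  ring_nf

lemma geomPath_pos (hu : 0 < u) (hv : 0 < v) (t : ℝ) : 0 < geomPath u v t := by
  rw [geomPath_eq_exp hu hv]
  exact exp_pos _

@[simp] lemma geomPath_zero : geomPath u v 0 = u := by simp [geomPath]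

@[simp] lemma geomPath_one : geomPath u v 1 = v := by simp [geomPath]

lemma geomPath_one_sub (t : ℝ) : geomPath u v (1 - t) = geomPath v u t := by
  rw [geomPath, geomPath, sub_sub_cancel, mul_comm]

lemma geomPath_half (hu : 0 ≤ u) (hv : 0 ≤ v) : geomPath u v (1 / 2) = √(u * v) := by
  rw [geomPath, sqrt_eq_rpow, mul_rpow hu hv]
  norm_num

lemma geomPath_eq_mul_rpow (hu : 0 < u) (hv : 0 < v) (t : ℝ) :
    geomPath u v t = u * (v / u) ^ t := by
  rw [geomPath, div_rpow hv.le hu.le, rpow_sub hu, rpow_one]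
  field_simp

lemma hasDerivAt_geomPath (hu : 0 < u) (hv : 0 < v) (t : ℝ) :
    HasDerivAt (geomPath u v) ((log v - log u) * geomPath u v t) t := by
  rw [funext (geomPath_eq_exp hu hv), mul_comm]
  exact ((hasDerivAt_mul_const _).const_add _).exp

lemma continuous_geomPath (hu : 0 < u) (hv : 0 < v) : Continuous (geomPath u v) :=
  continuous_iff_continuousAt.2 fun t => (hasDerivAt_geomPath hu hv t).continuousAt

lemma geomPath_mem_Icc {a b t : ℝ} (ha : 0 < a) (hu : u ∈ Icc a b) (hv : v ∈ Icc a b)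
    (ht : t ∈ Icc (0 : ℝ) 1) : geomPath u v t ∈ Icc a b := by
  have hself : ∀ c : ℝ, 0 < c → geomPath c c t = c := fun c hc => by
    rw [geomPath, ← rpow_add hc, sub_add_cancel, rpow_one]
  have hb : 0 < b := ha.trans_le (hu.1.trans hu.2)
  have h1t : 0 ≤ 1 - t := sub_nonneg.2 ht.2
  constructor
  · calc a = geomPath a a t := (hself a ha).symm
      _ ≤ geomPath u v t :=
          mul_le_mul (rpow_le_rpow ha.le hu.1 h1t) (rpow_le_rpow ha.le hv.1 ht.1)
          (by positivity) (by positivity [ha.trans_le hu.1])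
  · calc geomPath u v t ≤ geomPath b b t :=
          mul_le_mul (rpow_le_rpow (ha.le.trans hu.1) hu.2 h1t)
            (rpow_le_rpow (ha.le.trans hv.1) hv.2 ht.1) (by positivity [ha.trans_le hv.1])
            (by positivity)
      _ = b := hself b hb

end geomPath

lemma integral_comp_geomPath {f : ℝ → ℝ} {u v : ℝ} (hu : 0 < u) (huv : u ≤ v)
    (hf : ContinuousOn f (Icc u v)) :
    (log v - log u) * ∫ t in (0 : ℝ)..1, f (geomPath u v t) = ∫ x in u..v, f x / x := by
  have hv : 0 < v := hu.trans_le huv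
  have hg : ContinuousOn (fun x => f x / x) (geomPath u v '' uIcc 0 1) := by
    refine (hf.div continuousOn_id fun x hx => (hu.trans_le hx.1).ne').mono ?_
    rintro _ ⟨t, ht, rfl⟩
    rw [uIcc_of_le zero_le_one] at ht
    exact geomPath_mem_Icc hu ⟨le_rfl, huv⟩ ⟨huv, le_rfl⟩ ht
  have hsubst := intervalIntegral.integral_comp_mul_deriv' (fun t _ => hasDerivAt_geomPath hu hv t)
    ((continuous_geomPath hu hv).const_mul _).continuousOn hg
  rw [geomPath_zero, geomPath_one] at hsubst
  rw [← hsubst, ← intervalIntegral.integral_const_mul]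
  refine intervalIntegral.integral_congr fun t _ => ?_
  have := (geomPath_pos hu hv t).ne'
  simp only [Function.comp]
  field_simp

section Midpoint

variable {h h' : ℝ → ℝ}

lemma half_sub_integral_eq (hd : ∀ t ∈ Icc (0 : ℝ) 1, HasDerivAt h (h' t) t)
    (hi : IntervalIntegrable h' volume 0 1) :
    h (1 / 2) - ∫ t in (0 : ℝ)..1, h t
      = (∫ t in (0 : ℝ)..1 / 2, t * h' t) + ∫ t in (1 / 2 : ℝ)..1, (t - 1) * h' t := by
  have hcont : ContinuousOn h (Icc 0 1) := fun t ht => (hd t ht).continuousAt.continuousWithinAt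
  have hsub₁ : uIcc (0 : ℝ) (1 / 2) ⊆ Icc 0 1 := by
    rw [uIcc_of_le (by norm_num)]; exact Icc_subset_Icc_right (by norm_num)
  have hsub₂ : uIcc (1 / 2 : ℝ) 1 ⊆ Icc 0 1 := by
    rw [uIcc_of_le (by norm_num)]; exact Icc_subset_Icc_left (by norm_num)
  have hi' : ∀ {c d : ℝ}, uIcc c d ⊆ Icc 0 1 → IntervalIntegrable h' volume c d :=
    fun hcd => hi.mono_set (by rwa [uIcc_of_le zero_le_one])
  have hleft := intervalIntegral.integral_mul_deriv_eq_deriv_mul (u' := fun _ => 1)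
    (fun t _ => hasDerivAt_id t) (fun t ht => hd t (hsub₁ ht)) intervalIntegrable_const
    (hi' hsub₁)
  have hright := intervalIntegral.integral_mul_deriv_eq_deriv_mul (u' := fun _ => 1)
    (fun t _ => (hasDerivAt_id t).sub_const 1) (fun t ht => hd t (hsub₂ ht))
    intervalIntegrable_const (hi' hsub₂)
  have hsplit := intervalIntegral.integral_add_adjacent_intervals
    ((hcont.mono hsub₁).intervalIntegrable (μ := volume))
    ((hcont.mono hsub₂).intervalIntegrable (μ := volume))
  simp only [id, one_mul] at hleft hright
  rw [hleft, hright, ← hsplit]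
  ring

lemma abs_half_sub_integral_le (hd : ∀ t ∈ Icc (0 : ℝ) 1, HasDerivAt h (h' t) t)
    (hi : IntervalIntegrable h' volume 0 1) :
    |h (1 / 2) - ∫ t in (0 : ℝ)..1, h t|
      ≤ (∫ t in (0 : ℝ)..1 / 2, t * |h' t|)
        + ∫ t in (0 : ℝ)..1 / 2, t * |h' (1 - t)| := by
  have hreflect : ∫ t in (0 : ℝ)..1 / 2, t * |h' (1 - t)|
      = ∫ t in (1 / 2 : ℝ)..1, (1 - t) * |h' t| := by
    have := intervalIntegral.integral_comp_sub_left (fun t => (1 - t) * |h' t|)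
      (a := 0) (b := 1 / 2) 1
    norm_num at this
    exact this
  rw [half_sub_integral_eq hd hi, hreflect]
  refine (abs_add_le _ _).trans (add_le_add ?_ ?_)
  · refine (intervalIntegral.abs_integral_le_integral_abs (by norm_num)).trans_eq
      (intervalIntegral.integral_congr fun t ht => ?_)
    rw [uIcc_of_le (by norm_num)] at ht
    rw [abs_mul, abs_of_nonneg ht.1]
  · refine (intervalIntegral.abs_integral_le_integral_abs (by norm_num)).trans_eq
      (intervalIntegral.integral_congr fun t ht => ?_)
    rw [uIcc_of_le (by norm_num)] at ht
    rw [abs_mul, abs_of_nonpos (by linarith [ht.2]), neg_sub]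

end Midpoint

lemma integral_mul_rpow_two_mul_eq_g₁ {u : ℝ} (hu : 0 < u) :
    ∫ t in (0 : ℝ)..1 / 2, t * u ^ (2 * t) = g₁ u / 4 := by
  rcases eq_or_ne u 1 with rfl | hu1
  · simp only [one_rpow, mul_one, integral_id, g₁, if_pos]
    norm_num
  have hc : log u ≠ 0 := log_ne_zero_of_pos_of_ne_one hu hu1
  have hderiv : ∀ t ∈ uIcc (0 : ℝ) (1 / 2), HasDerivAt
      (fun t => exp (log u * (2 * t)) * (2 * (t * log u) - 1) / (4 * log u ^ 2))
      (t * exp (log u * (2 * t))) t := by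
    intro t _
    have hlin : HasDerivAt (fun t : ℝ => log u * (2 * t)) (log u * 2) t := by
      simpa using ((hasDerivAt_id t).const_mul 2).const_mul (log u)
    refine ((hlin.exp.mul ((hasDerivAt_mul_const (log u)).const_mul 2 |>.sub_const 1))).div_const
      (4 * log u ^ 2) |>.congr_deriv ?_
    field_simp
    ring
  simp_rw [rpow_def_of_pos hu]
  rw [intervalIntegral.integral_eq_sub_of_hasDerivAt hderiv
    ((Continuous.intervalIntegrable (by fun_prop)) _ _), g₁, if_neg hu1]
  have he : exp (log u * (2 * (1 / 2))) = u := by norm_num [exp_log hu]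
  rw [he]
  simp only [mul_zero, exp_zero]
  field_simp
  ring

lemma g₁_nonneg {u : ℝ} (hu : 0 < u) : 0 ≤ g₁ u := by
  have h := intervalIntegral.integral_nonneg (μ := volume) (by norm_num : (0 : ℝ) ≤ 1 / 2)
    fun t ht => mul_nonneg ht.1 (rpow_nonneg hu.le (2 * t))
  rw [integral_mul_rpow_two_mul_eq_g₁ hu] at h
  linarith

lemma memLp_ofReal_of_integrable_rpow {α : Type*} [MeasurableSpace α] {μ : Measure α}
    {f : α → ℝ} {r : ℝ} (hr : 0 < r) (hfm : AEStronglyMeasurable f μ) (hf : 0 ≤ᵐ[μ] f)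
    (hfr : Integrable (fun x => f x ^ r) μ) : MemLp f (ENNReal.ofReal r) μ := by
  refine (integrable_norm_rpow_iff hfm (by simpa using hr) ENNReal.ofReal_ne_top).1 ?_
  rw [ENNReal.toReal_ofReal hr.le]
  refine hfr.congr ?_
  filter_upwards [hf] with x hx
  rw [Real.norm_of_nonneg hx]

theorem integral_mul_le_integral_mul_rpow {α : Type*} [MeasurableSpace α] {μ : Measure α}
    {w g : α → ℝ} {q : ℝ} (hq : 1 ≤ q) (hw : 0 ≤ᵐ[μ] w) (hg : 0 ≤ᵐ[μ] g)
    (hwi : Integrable w μ) (hgm : AEStronglyMeasurable g μ)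
    (hwgi : Integrable (fun x => w x * g x ^ q) μ) :
    ∫ x, w x * g x ∂μ
      ≤ (∫ x, w x ∂μ) ^ (1 - 1 / q) * (∫ x, w x * g x ^ q ∂μ) ^ (1 / q) := by
  rcases hq.eq_or_lt with rfl | hq
  · simp
  set p := q.conjExponent
  have hpq : p.HolderConjugate q := (Real.HolderConjugate.conjExponent hq).symm
  have hp : 1 / p = 1 - 1 / q := by
    have := hpq.inv_add_inv_eq_one
    rw [one_div, one_div]
    linarith
  set F := fun x => w x ^ (1 / p)
  set G := fun x => w x ^ (1 / q) * g x
  have hFm : AEStronglyMeasurable F μ := (hwi.1.aemeasurable.pow_const _).aestronglyMeasurable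
  have hGm : AEStronglyMeasurable G μ :=
    ((hwi.1.aemeasurable.pow_const _).mul hgm.aemeasurable).aestronglyMeasurable
  have hFnn : 0 ≤ᵐ[μ] F := by
    filter_upwards [hw] with x hx
    exact rpow_nonneg hx _
  have hGnn : 0 ≤ᵐ[μ] G := by
    filter_upwards [hw, hg] with x hx hgx
    exact mul_nonneg (rpow_nonneg hx _) hgx
  have hFp : (fun x => F x ^ p) =ᵐ[μ] w := by
    filter_upwards [hw] with x hx
    simp only [F, one_div]
    exact rpow_inv_rpow hx hpq.ne_zero
  have hGq : (fun x => G x ^ q) =ᵐ[μ] fun x => w x * g x ^ q := by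
    filter_upwards [hw, hg] with x hx hgx
    simp only [G, one_div]
    rw [mul_rpow (rpow_nonneg hx _) hgx, rpow_inv_rpow hx hpq.symm.ne_zero]
  have hFG : (fun x => F x * G x) =ᵐ[μ] fun x => w x * g x := by
    filter_upwards [hw] with x hx
    simp only [F, G]
    rw [← mul_assoc, ← rpow_add' hx (by rw [hp]; simp), hp, sub_add_cancel, rpow_one]
  have := integral_mul_le_Lp_mul_Lq_of_nonneg hpq hFnn hGnn
    (memLp_ofReal_of_integrable_rpow hpq.pos hFm hFnn (hwi.congr hFp.symm))
    (memLp_ofReal_of_integrable_rpow hpq.symm.pos hGm hGnn (hwgi.congr hGq.symm))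
  rwa [integral_congr_ae hFG, integral_congr_ae hFp, integral_congr_ae hGq, hp] at this

lemma geomPath_mul_abs_comp_le {f' : ℝ → ℝ} {J : Set ℝ} {s q u v t : ℝ}
    (hconv : SGeometricallyConvexOn s J (fun x => |f' x| ^ q)) (hq : 0 < q)
    (hs : s ∈ Ioc (0 : ℝ) 1) (hu : u ∈ J) (hv : v ∈ J) (hu0 : 0 < u) (hv0 : 0 < v)
    (hfu : 1 ≤ |f' u|) (hfv : 1 ≤ |f' v|) (ht : t ∈ Icc (0 : ℝ) 1) :
    geomPath u v t * |f' (geomPath u v t)|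
      ≤ u * |f' u| * |f' v| ^ (1 - s) * (v * |f' v| ^ s / (u * |f' u| ^ s)) ^ t := by
  set A := |f' u|
  set B := |f' v|
  have hA : 0 < A := one_pos.trans_le hfu
  have hB : 0 < B := one_pos.trans_le hfv
  have hroot : |f' (geomPath u v t)| ≤ B ^ t ^ s * A ^ (1 - t) ^ s := by
    have h := hconv v hv u hu t ht
    rw [← rpow_mul hB.le, ← rpow_mul hA.le, mul_comm q, mul_comm q, rpow_mul hB.le,
      rpow_mul hA.le, ← mul_rpow (by positivity) (by positivity), mul_comm (v ^ t)] at h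
    exact (rpow_le_rpow_iff (abs_nonneg _) (by positivity) hq).1 h
  have bernoulli : ∀ x ∈ Icc (0 : ℝ) 1, x ^ s ≤ s * x + (1 - s) := fun x hx => by
    have := rpow_one_add_le_one_add_mul_self (by linarith [hx.1] : -1 ≤ x - 1) hs.1.le hs.2
    rw [add_sub_cancel] at this
    linarith
  have hexp : B ^ t ^ s * A ^ (1 - t) ^ s ≤ B ^ (s * t + (1 - s)) * A ^ (s * (1 - t) + (1 - s)) :=
    mul_le_mul (rpow_le_rpow_of_exponent_le hfv (bernoulli t ht))
      (rpow_le_rpow_of_exponent_le hfu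
        (bernoulli (1 - t) ⟨by linarith [ht.2], by linarith [ht.1]⟩))
      (by positivity) (by positivity)
  calc geomPath u v t * |f' (geomPath u v t)|
      ≤ geomPath u v t * (B ^ (s * t + (1 - s)) * A ^ (s * (1 - t) + (1 - s))) :=
        mul_le_mul_of_nonneg_left (hroot.trans hexp) (geomPath_pos hu0 hv0 t).le
    _ = u * A * B ^ (1 - s) * (v * B ^ s / (u * A ^ s)) ^ t := by
        have hρ : v * B ^ s / (u * A ^ s) = v / u * B ^ s / A ^ s := by field_simp
        rw [hρ, div_rpow (by positivity) (by positivity), mul_rpow (by positivity) (by positivity),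
          geomPath_eq_mul_rpow hu0 hv0, show s * t + (1 - s) = (1 - s) + s * t by ring,
          show s * (1 - t) + (1 - s) = 1 - s * t by ring, rpow_add hB, rpow_sub hA, rpow_one,
          rpow_mul hB.le, rpow_mul hA.le]
        field_simp

lemma integral_mul_le_g₁_of_rpow_le {G : ℝ → ℝ} {q C r : ℝ} (hq : 1 ≤ q) (hC : 0 ≤ C)
    (hr : 0 < r) (hGm : AEStronglyMeasurable G (volume.restrict (Ioc 0 (1 / 2))))
    (hG0 : ∀ t ∈ Ioc (0 : ℝ) (1 / 2), 0 ≤ G t)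
    (hG : ∀ t ∈ Ioc (0 : ℝ) (1 / 2), G t ^ q ≤ C ^ q * r ^ (2 * t)) :
    ∫ t in (0 : ℝ)..1 / 2, t * G t ≤ (1 / 2) ^ (3 - 1 / q) * C * g₁ r ^ (1 / q) := by
  have hq0 : 0 < q := one_pos.trans_le hq
  have hmajor : ∀ t ∈ Ioc (0 : ℝ) (1 / 2), t * G t ^ q ≤ C ^ q * (t * r ^ (2 * t)) := by
    intro t ht
    rw [mul_left_comm]
    exact mul_le_mul_of_nonneg_left (hG t ht) ht.1.le
  have hmajor_int : IntegrableOn (fun t => C ^ q * (t * r ^ (2 * t))) (Ioc 0 (1 / 2)) :=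
    have := hr.ne'
    Continuous.integrableOn_Ioc (by fun_prop)
  have hint : IntegrableOn (fun t => t * G t ^ q) (Ioc 0 (1 / 2)) := by
    refine hmajor_int.mono' (continuous_id.aestronglyMeasurable.mul
      (hGm.aemeasurable.pow_const q).aestronglyMeasurable) ?_
    refine (ae_restrict_iff' measurableSet_Ioc).2 (Filter.Eventually.of_forall fun t ht => ?_)
    rw [Real.norm_of_nonneg (mul_nonneg ht.1.le (rpow_nonneg (hG0 t ht) q))]
    exact hmajor t ht
  have holder := integral_mul_le_integral_mul_rpow hq
    ((ae_restrict_iff' measurableSet_Ioc).2 (Filter.Eventually.of_forall fun t ht => ht.1.le))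
    ((ae_restrict_iff' measurableSet_Ioc).2 (Filter.Eventually.of_forall hG0))
    (continuous_id.integrableOn_Ioc) hGm hint
  have hweight : ∫ t in Ioc (0 : ℝ) (1 / 2), t = 1 / 8 := by
    rw [← intervalIntegral.integral_of_le (by norm_num), integral_id]
    norm_num
  have hpower : ∫ t in Ioc (0 : ℝ) (1 / 2), t * G t ^ q ≤ C ^ q * (g₁ r / 4) := by
    refine (setIntegral_mono_on hint hmajor_int measurableSet_Ioc hmajor).trans_eq ?_
    rw [integral_const_mul, ← intervalIntegral.integral_of_le (by norm_num),
      integral_mul_rpow_two_mul_eq_g₁ hr]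
  have hg₁ := g₁_nonneg hr
  calc ∫ t in (0 : ℝ)..1 / 2, t * G t
      ≤ (1 / 8) ^ (1 - 1 / q) * (C ^ q * (g₁ r / 4)) ^ (1 / q) := by
        rw [intervalIntegral.integral_of_le (by norm_num), ← hweight]
        refine holder.trans (mul_le_mul_of_nonneg_left ?_ (by positivity))
        exact rpow_le_rpow (setIntegral_nonneg measurableSet_Ioc fun t ht =>
          mul_nonneg ht.1.le (rpow_nonneg (hG0 t ht) q)) hpower (by positivity)
    _ = (1 / 2) ^ (3 - 1 / q) * C * g₁ r ^ (1 / q) := by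
        rw [show (1 / 8 : ℝ) = (1 / 2) ^ (3 : ℝ) by norm_num,
          show g₁ r / 4 = g₁ r * (1 / 2) ^ (2 : ℝ) by norm_num; ring,
          mul_rpow (by positivity) (by positivity), mul_rpow hg₁ (by positivity), ← rpow_mul hC,
          ← rpow_mul (by norm_num), ← rpow_mul (by norm_num), mul_one_div_cancel hq0.ne',
          rpow_one,
          show 3 - 1 / q = 3 * (1 - 1 / q) + 2 * (1 / q) by ring, rpow_add (by norm_num)]
        ring

lemma aestronglyMeasurable_comp_geomPath {f f' : ℝ → ℝ} {a b u v : ℝ} (ha : 0 < a)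
    (hf : ∀ x ∈ Icc a b, HasDerivAt f (f' x) x) (hu : u ∈ Icc a b) (hv : v ∈ Icc a b) :
    AEStronglyMeasurable (fun t => f' (geomPath u v t)) (volume.restrict (Icc 0 1)) := by
  refine ((measurable_deriv f).comp (continuous_geomPath (ha.trans_le hu.1)
    (ha.trans_le hv.1)).measurable).aestronglyMeasurable.congr ?_
  refine (ae_restrict_iff' measurableSet_Icc).2 (Filter.Eventually.of_forall fun t ht => ?_)
  exact (hf _ (geomPath_mem_Icc ha hu hv ht)).deriv

section GeometricallyConvexDeriv

variable {f' : ℝ → ℝ} {J : Set ℝ} {s q u v : ℝ}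

lemma intervalIntegrable_geomPath_mul_comp
    (hconv : SGeometricallyConvexOn s J (fun x => |f' x| ^ q)) (hq : 0 < q)
    (hs : s ∈ Ioc (0 : ℝ) 1) (hu : u ∈ J) (hv : v ∈ J) (hu0 : 0 < u) (hv0 : 0 < v)
    (hfu : 1 ≤ |f' u|) (hfv : 1 ≤ |f' v|)
    (hmeas : AEStronglyMeasurable (fun t => f' (geomPath u v t)) (volume.restrict (Icc 0 1))) :
    IntervalIntegrable (fun t => geomPath u v t * f' (geomPath u v t)) volume 0 1 := by
  have hρ : 0 < v * |f' v| ^ s / (u * |f' u| ^ s) := by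
    have := one_pos.trans_le hfu
    have := one_pos.trans_le hfv
    positivity
  rw [intervalIntegrable_iff_integrableOn_Icc_of_le zero_le_one]
  have hρ' := hρ.ne'
  refine (Continuous.integrableOn_Icc (f := fun t => u * |f' u| * |f' v| ^ (1 - s) *
    (v * |f' v| ^ s / (u * |f' u| ^ s)) ^ t) (by fun_prop)).mono'
    ((continuous_geomPath hu0 hv0).aestronglyMeasurable.mul hmeas) ?_
  refine (ae_restrict_iff' measurableSet_Icc).2 (Filter.Eventually.of_forall fun t ht => ?_)
  rw [norm_mul, Real.norm_of_nonneg (geomPath_pos hu0 hv0 t).le, Real.norm_eq_abs]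
  exact geomPath_mul_abs_comp_le hconv hq hs hu hv hu0 hv0 hfu hfv ht

lemma integral_mul_geomPath_mul_abs_comp_le
    (hconv : SGeometricallyConvexOn s J (fun x => |f' x| ^ q)) (hq : 1 ≤ q)
    (hs : s ∈ Ioc (0 : ℝ) 1) (hu : u ∈ J) (hv : v ∈ J) (hu0 : 0 < u) (hv0 : 0 < v)
    (hfu : 1 ≤ |f' u|) (hfv : 1 ≤ |f' v|)
    (hmeas : AEStronglyMeasurable (fun t => f' (geomPath u v t)) (volume.restrict (Icc 0 1))) :
    ∫ t in (0 : ℝ)..1 / 2, t * (geomPath u v t * |f' (geomPath u v t)|)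
      ≤ (1 / 2) ^ (3 - 1 / q) * (u * |f' u| * |f' v| ^ (1 - s))
        * g₁ ((v * |f' v| ^ s / (u * |f' u| ^ s)) ^ (q / 2)) ^ (1 / q) := by
  have hq0 : 0 < q := one_pos.trans_le hq
  have hA := one_pos.trans_le hfu
  have hB := one_pos.trans_le hfv
  have hρ : 0 < v * |f' v| ^ s / (u * |f' u| ^ s) := by positivity
  have hsub : Ioc (0 : ℝ) (1 / 2) ⊆ Icc 0 1 :=
    Ioc_subset_Icc_self.trans (Icc_subset_Icc_right (by norm_num))
  refine integral_mul_le_g₁_of_rpow_le hq (by positivity) (rpow_pos_of_pos hρ _)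
    (((continuous_geomPath hu0 hv0).aestronglyMeasurable.mul hmeas.norm).mono_measure
      (Measure.restrict_mono hsub le_rfl))
    (fun t _ => mul_nonneg (geomPath_pos hu0 hv0 t).le (abs_nonneg _)) fun t ht => ?_
  calc (geomPath u v t * |f' (geomPath u v t)|) ^ q
      ≤ (u * |f' u| * |f' v| ^ (1 - s) * (v * |f' v| ^ s / (u * |f' u| ^ s)) ^ t) ^ q :=
        rpow_le_rpow (mul_nonneg (geomPath_pos hu0 hv0 t).le (abs_nonneg _))
          (geomPath_mul_abs_comp_le hconv hq0 hs hu hv hu0 hv0 hfu hfv (hsub ht)) hq0.le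
    _ = (u * |f' u| * |f' v| ^ (1 - s)) ^ q
          * ((v * |f' v| ^ s / (u * |f' u| ^ s)) ^ (q / 2)) ^ (2 * t) := by
        rw [mul_rpow (by positivity) (by positivity), ← rpow_mul hρ.le, ← rpow_mul hρ.le]
        ring_nf

end GeometricallyConvexDeriv

lemma abs_sub_logMean_le {f f' : ℝ → ℝ} {a b : ℝ} (ha : 0 < a) (hab : a < b)
    (hf : ∀ x ∈ Icc a b, HasDerivAt f (f' x) x)
    (hi : IntervalIntegrable (fun t => geomPath a b t * f' (geomPath a b t)) volume 0 1) :
    |f √(a * b) - 1 / (log b - log a) * ∫ x in a..b, f x / x|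
      ≤ (log b - log a)
          * (∫ t in (0 : ℝ)..1 / 2, t * (geomPath a b t * |f' (geomPath a b t)|))
        + (log b - log a)
          * ∫ t in (0 : ℝ)..1 / 2, t * (geomPath b a t * |f' (geomPath b a t)|) := by
  have hb : 0 < b := ha.trans hab
  set L := log b - log a
  have hL : 0 < L := sub_pos.2 (log_lt_log ha hab)
  have hd : ∀ t ∈ Icc (0 : ℝ) 1, HasDerivAt (fun t => f (geomPath a b t))
      (L * (geomPath a b t * f' (geomPath a b t))) t := fun t ht =>
    ((hf _ (geomPath_mem_Icc ha (left_mem_Icc.2 hab.le) (right_mem_Icc.2 hab.le) ht)).comp t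
      (hasDerivAt_geomPath ha hb t)).congr_deriv (by ring)
  have hmean : 1 / L * ∫ x in a..b, f x / x = ∫ t in (0 : ℝ)..1, f (geomPath a b t) := by
    have := integral_comp_geomPath ha hab.le fun x hx => (hf x hx).continuousAt.continuousWithinAt
    rw [← this, ← mul_assoc, one_div_mul_cancel hL.ne', one_mul]
  have habs : ∀ {u v : ℝ}, 0 < u → 0 < v → ∀ t,
      |L * (geomPath u v t * f' (geomPath u v t))| = L * (geomPath u v t * |f' (geomPath u v t)|) :=
    fun hu hv t => by rw [abs_mul, abs_mul, abs_of_pos hL, abs_of_pos (geomPath_pos hu hv t)]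
  rw [hmean, ← geomPath_half ha.le hb.le]
  refine (abs_half_sub_integral_le hd (hi.const_mul L)).trans_eq ?_
  simp only [geomPath_one_sub, habs ha hb, habs hb ha, mul_left_comm _ L,
    intervalIntegral.integral_const_mul]

theorem stmt_7_general
    (I : Set ℝ) (hI : I.OrdConnected) (hIpos : I ⊆ Set.Ioi (0:ℝ))
    (f f' : ℝ → ℝ)
    (a b : ℝ) (ha : a ∈ interior I) (hb : b ∈ interior I) (hab : a < b)
    (hdiff : ∀ x ∈ interior I, HasDerivAt f (f' x) x)
    (q s : ℝ) (hq : 1 ≤ q) (hs : s ∈ Set.Ioc (0:ℝ) 1)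
    (hconv : SGeometricallyConvexOn s (Set.Icc a b) (fun x => |f' x| ^ q))
    (hfa : 1 ≤ |f' a|) (hfb : 1 ≤ |f' b|) :
    |f (Real.sqrt (a * b)) - (1 / (Real.log b - Real.log a)) * ∫ x in a..b, f x / x| ≤
      Real.log (b / a) * (1 / 2 : ℝ) ^ (3 - 1 / q) *
        (a * |f' a| * |f' b| ^ (1 - s) * (g₁ ((b * |f' b| ^ s / (a * |f' a| ^ s)) ^ (q / 2))) ^ (1 / q)
         + b * |f' b| * |f' a| ^ (1 - s) * (g₁ ((a * |f' a| ^ s / (b * |f' b| ^ s)) ^ (q / 2))) ^ (1 / q)) := by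
  have ha0 : 0 < a := hIpos (interior_subset ha)
  have hb0 : 0 < b := hIpos (interior_subset hb)
  have haJ : a ∈ Icc a b := left_mem_Icc.2 hab.le
  have hbJ : b ∈ Icc a b := right_mem_Icc.2 hab.le
  have hf : ∀ x ∈ Icc a b, HasDerivAt f (f' x) x :=
    fun x hx => hdiff x (hI.interior.out ha hb hx)
  have hmeas_ab := aestronglyMeasurable_comp_geomPath ha0 hf haJ hbJ
  have hmeas_ba := aestronglyMeasurable_comp_geomPath ha0 hf hbJ haJ
  have h₁ := integral_mul_geomPath_mul_abs_comp_le hconv hq hs haJ hbJ ha0 hb0 hfa hfb hmeas_ab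
  have h₂ := integral_mul_geomPath_mul_abs_comp_le hconv hq hs hbJ haJ hb0 ha0 hfb hfa hmeas_ba
  have hL : 0 < log b - log a := sub_pos.2 (log_lt_log ha0 hab)
  calc _ ≤ _ := abs_sub_logMean_le ha0 hab hf (intervalIntegrable_geomPath_mul_comp hconv
          (one_pos.trans_le hq) hs haJ hbJ ha0 hb0 hfa hfb hmeas_ab)
    _ ≤ _ :=
        add_le_add (mul_le_mul_of_nonneg_left h₁ hL.le) (mul_le_mul_of_nonneg_left h₂ hL.le)
    _ = _ := by
        rw [log_div hb0.ne' ha0.ne']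
        ring

theorem stmt_7
    (I : Set ℝ) (hI : I.OrdConnected) (hIpos : I ⊆ Set.Ioi (0:ℝ))
    (f f' : ℝ → ℝ) (hfpos : ∀ x ∈ I, 0 < f x)
    (a b : ℝ) (ha : a ∈ interior I) (hb : b ∈ interior I) (hab : a < b)
    (hdiff : ∀ x ∈ interior I, HasDerivAt f (f' x) x)
    (hint : IntervalIntegrable f' volume a b)
    (q s : ℝ) (hq : 1 ≤ q) (hs : s ∈ Set.Ioc (0:ℝ) 1)
    (hconv : SGeometricallyConvexOn s (Set.Icc a b) (fun x => |f' x| ^ q))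
    (hfa : 1 ≤ |f' a|) (hfb : 1 ≤ |f' b|) :
    |f (Real.sqrt (a * b)) - (1 / (Real.log b - Real.log a)) * ∫ x in a..b, f x / x| ≤
      Real.log (b / a) * (1 / 2 : ℝ) ^ (3 - 1 / q) *
        (a * |f' a| * |f' b| ^ (1 - s) * (g₁ ((b * |f' b| ^ s / (a * |f' a| ^ s)) ^ (q / 2))) ^ (1 / q)
         + b * |f' b| * |f' a| ^ (1 - s) * (g₁ ((a * |f' a| ^ s / (b * |f' b| ^ s)) ^ (q / 2))) ^ (1 / q)) :=
  stmt_7_general I hI hIpos f f' a b ha hb hab hdiff q s hq hs hconv hfa hfb
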